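/- arXiv:cs/0702153 — 4 statements merged into one kernel-verified Lean document; each statement's English description precedes it below -/
import Mathlib

section
/- On a Sperner triangle of any size n, if every node is colored with one of three colors such that the three corner nodes receive distinct colors and each node on a boundary edge receives one of the two colors of that edge's endpoints, then there exists a small triangle (three mutually adjacent nodes) whose vertices have all three distinct colors. -/
/-- Two nodes of the Sperner triangle (triples summing to `n-1`) are adjacent iff
they differ by `+1` in one coordinate and `-1` in another. -/
def SpAdj (p q : Fin 3 → ℕ) : Prop :=
  ∃ i j : Fin 3, i ≠ j ∧ q i = p i + 1 ∧ p j = q j + 1 ∧ ∀ k, k ≠ i → k ≠ j → p k = q k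

namespace SpernerAux

/-- Indicator (in `ZMod 2`) that a pair of colors is `{0, 1}`. -/
def D (x y : Fin 3) : ZMod 2 := if (x = 0 ∧ y = 1) ∨ (x = 1 ∧ y = 0) then 1 else 0

def hE (C : ℕ → ℕ → Fin 3) (a b : ℕ) : ZMod 2 := D (C a b) (C (a+1) b)
def vE (C : ℕ → ℕ → Fin 3) (a b : ℕ) : ZMod 2 := D (C a b) (C a (b+1))
def gE (C : ℕ → ℕ → Fin 3) (a b : ℕ) : ZMod 2 := D (C (a+1) b) (C a (b+1))

lemma addself (x : ZMod 2) : x + x = 0 := by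
  rw [← two_mul, show (2 : ZMod 2) = 0 from rfl, zero_mul]

lemma Lup : ∀ x y z : Fin 3, ¬(x ≠ y ∧ y ≠ z ∧ x ≠ z) → D x y + D x z + D y z = 0 := by decide

lemma Ldown : ∀ x y z : Fin 3, ¬(y ≠ z ∧ z ≠ x ∧ y ≠ x) → D z x + D y x + D y z = 0 := by
  decide

lemma Dno1 : ∀ x y : Fin 3, x ≠ 1 → y ≠ 1 → D x y = 0 := by decide

lemma Dno0 : ∀ x y : Fin 3, x ≠ 0 → y ≠ 0 → D x y = 0 := by decide

lemma Dno2 : ∀ x y : Fin 3, x ≠ 2 → y ≠ 2 →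
    D x y = (if x = 0 then (0 : ZMod 2) else 1) - (if y = 0 then (0 : ZMod 2) else 1) := by
  decide

/-- Sperner's lemma in planar coordinates: `C a b` is the color of the node `(a, b, m-a-b)`. -/
lemma aux (m : ℕ) (hm : 1 ≤ m) (C : ℕ → ℕ → Fin 3)
    (hC0 : C m 0 = 0) (hC1 : C 0 m = 1)
    (hb1 : ∀ a, a ≤ m → C a 0 ≠ 1)
    (hb0 : ∀ b, b ≤ m → C 0 b ≠ 0)
    (hb2 : ∀ a, a ≤ m → C a (m - a) ≠ 2) :
    (∃ a b, a + b + 1 ≤ m ∧ C a b ≠ C (a+1) b ∧ C (a+1) b ≠ C a (b+1) ∧ C a b ≠ C a (b+1)) ∨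
    (∃ a b, a + b + 2 ≤ m ∧ C (a+1) b ≠ C a (b+1) ∧ C a (b+1) ≠ C (a+1) (b+1) ∧
      C (a+1) b ≠ C (a+1) (b+1)) := by
  by_contra hcon
  rw [not_or] at hcon
  obtain ⟨hup', hdown'⟩ := hcon
  have hup : ∀ a b, a + b + 1 ≤ m →
      ¬(C a b ≠ C (a+1) b ∧ C (a+1) b ≠ C a (b+1) ∧ C a b ≠ C a (b+1)) :=
    fun a b hab hc => hup' ⟨a, b, hab, hc⟩
  have hdown : ∀ a b, a + b + 2 ≤ m →
      ¬(C (a+1) b ≠ C a (b+1) ∧ C a (b+1) ≠ C (a+1) (b+1) ∧ C (a+1) b ≠ C (a+1) (b+1)) :=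
    fun a b hab hc => hdown' ⟨a, b, hab, hc⟩
  obtain ⟨m', rfl⟩ : ∃ m', m = m' + 1 := ⟨m - 1, by omega⟩
  -- the total sum over all small triangles of the number of {0,1}-doors
  have hS0 : (∑ a ∈ Finset.range (m'+1), ∑ b ∈ Finset.range (m'+1-a),
        (hE C a b + vE C a b + gE C a b))
      + (∑ a ∈ Finset.range m', ∑ b ∈ Finset.range (m'-a),
        (hE C a (b+1) + vE C (a+1) b + gE C a b)) = 0 := by
    have e1 : ∀ a ∈ Finset.range (m'+1), (∑ b ∈ Finset.range (m'+1-a),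
        (hE C a b + vE C a b + gE C a b)) = 0 := by
      intro a ha
      apply Finset.sum_eq_zero
      intro b hb
      simp only [Finset.mem_range] at ha hb
      simp only [hE, vE, gE]
      exact Lup (C a b) (C (a+1) b) (C a (b+1)) (hup a b (by omega))
    have e2 : ∀ a ∈ Finset.range m', (∑ b ∈ Finset.range (m'-a),
        (hE C a (b+1) + vE C (a+1) b + gE C a b)) = 0 := by
      intro a ha
      apply Finset.sum_eq_zero
      intro b hb
      simp only [Finset.mem_range] at ha hb
      simp only [hE, vE, gE]
      exact Ldown (C (a+1) (b+1)) (C (a+1) b) (C a (b+1)) (hdown a b (by omega))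
    rw [Finset.sum_eq_zero e1, Finset.sum_eq_zero e2, add_zero]
  -- horizontal edges cancel up to the bottom boundary, which carries no doors
  have HA : (∑ a ∈ Finset.range (m'+1), ∑ b ∈ Finset.range (m'+1-a), hE C a b)
      + (∑ a ∈ Finset.range m', ∑ b ∈ Finset.range (m'-a), hE C a (b+1)) = 0 := by
    have e1 : ∀ a ∈ Finset.range (m'+1), (∑ b ∈ Finset.range (m'+1-a), hE C a b)
        = (∑ b ∈ Finset.range (m'-a), hE C a (b+1)) + hE C a 0 := by
      intro a ha
      simp only [Finset.mem_range] at ha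
      rw [show m'+1-a = (m'-a)+1 by omega, Finset.sum_range_succ']
    have e0 : (∑ a ∈ Finset.range (m'+1), ∑ b ∈ Finset.range (m'-a), hE C a (b+1))
        = ∑ a ∈ Finset.range m', ∑ b ∈ Finset.range (m'-a), hE C a (b+1) := by
      rw [Finset.sum_range_succ]
      simp
    have ebd : ∀ a ∈ Finset.range (m'+1), hE C a 0 = 0 := by
      intro a ha
      simp only [Finset.mem_range] at ha
      simp only [hE]
      exact Dno1 _ _ (hb1 a (by omega)) (hb1 (a+1) (by omega))
    rw [Finset.sum_congr rfl e1, Finset.sum_add_distrib, Finset.sum_eq_zero ebd, add_zero, e0]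
    exact addself _
  -- vertical edges cancel up to the left boundary, which carries no doors
  have HB : (∑ a ∈ Finset.range (m'+1), ∑ b ∈ Finset.range (m'+1-a), vE C a b)
      + (∑ a ∈ Finset.range m', ∑ b ∈ Finset.range (m'-a), vE C (a+1) b) = 0 := by
    rw [Finset.sum_range_succ' (fun a => ∑ b ∈ Finset.range (m'+1-a), vE C a b) m']
    have e2 : ∀ a ∈ Finset.range m', (∑ b ∈ Finset.range (m'+1-(a+1)), vE C (a+1) b)
        = ∑ b ∈ Finset.range (m'-a), vE C (a+1) b := by
      intro a ha
      rw [show m'+1-(a+1) = m'-a by omega]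
    have e3 : (∑ b ∈ Finset.range (m'+1-0), vE C 0 b) = 0 := by
      apply Finset.sum_eq_zero
      intro b hb
      simp only [Finset.mem_range] at hb
      simp only [vE]
      exact Dno0 _ _ (hb0 b (by omega)) (hb0 (b+1) (by omega))
    rw [Finset.sum_congr rfl e2, e3, add_zero]
    exact addself _
  -- diagonal edges cancel up to the hypotenuse, which carries an odd number of doors
  have HG : (∑ a ∈ Finset.range (m'+1), ∑ b ∈ Finset.range (m'+1-a), gE C a b)
      + (∑ a ∈ Finset.range m', ∑ b ∈ Finset.range (m'-a), gE C a b) = 1 := by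
    have e1 : ∀ a ∈ Finset.range (m'+1), (∑ b ∈ Finset.range (m'+1-a), gE C a b)
        = (∑ b ∈ Finset.range (m'-a), gE C a b) + gE C a (m'-a) := by
      intro a ha
      simp only [Finset.mem_range] at ha
      rw [show m'+1-a = (m'-a)+1 by omega, Finset.sum_range_succ]
    have e0 : (∑ a ∈ Finset.range (m'+1), ∑ b ∈ Finset.range (m'-a), gE C a b)
        = ∑ a ∈ Finset.range m', ∑ b ∈ Finset.range (m'-a), gE C a b := by
      rw [Finset.sum_range_succ]
      simp
    have eT : (∑ a ∈ Finset.range (m'+1), gE C a (m'-a)) = 1 := by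
      have e4 : ∀ a ∈ Finset.range (m'+1), gE C a (m'-a)
          = (if C (a+1) (m'+1-(a+1)) = 0 then (0:ZMod 2) else 1)
            - (if C a (m'+1-a) = 0 then (0:ZMod 2) else 1) := by
        intro a ha
        simp only [Finset.mem_range] at ha
        simp only [gE]
        rw [show m'-a+1 = m'+1-a by omega, show m'-a = m'+1-(a+1) by omega]
        exact Dno2 _ _ (hb2 (a+1) (by omega)) (hb2 a (by omega))
      rw [Finset.sum_congr rfl e4,
        Finset.sum_range_sub (fun k => if C k (m'+1-k) = 0 then (0:ZMod 2) else 1) (m'+1)]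
      rw [Nat.sub_self, Nat.sub_zero, hC0, hC1]
      decide
    calc (∑ a ∈ Finset.range (m'+1), ∑ b ∈ Finset.range (m'+1-a), gE C a b)
        + (∑ a ∈ Finset.range m', ∑ b ∈ Finset.range (m'-a), gE C a b)
        = ((∑ a ∈ Finset.range m', ∑ b ∈ Finset.range (m'-a), gE C a b)
            + (∑ a ∈ Finset.range m', ∑ b ∈ Finset.range (m'-a), gE C a b))
          + (∑ a ∈ Finset.range (m'+1), gE C a (m'-a)) := by
          rw [Finset.sum_congr rfl e1, Finset.sum_add_distrib, e0]
          ring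
      _ = 1 := by rw [addself, zero_add, eT]
  have key : (∑ a ∈ Finset.range (m'+1), ∑ b ∈ Finset.range (m'+1-a),
        (hE C a b + vE C a b + gE C a b))
      + (∑ a ∈ Finset.range m', ∑ b ∈ Finset.range (m'-a),
        (hE C a (b+1) + vE C (a+1) b + gE C a b)) = 1 := by
    simp only [Finset.sum_add_distrib]
    linear_combination HA + HB + HG
  rw [hS0] at key
  exact absurd key (by decide)

end SpernerAux

set_option maxHeartbeats 1000000 in
/-- Sperner's lemma (existence): any coloring of a size-`n` Sperner triangle whose
corners get the three distinct colors and where a node with `i`-th coordinate `0`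
is never colored `i` admits a tri-colored small triangle. -/
theorem sperner_lemma_exists (n : ℕ) (hn : 1 ≤ n) (color : (Fin 3 → ℕ) → Fin 3)
    (hcorner : ∀ i : Fin 3, color (fun j => if j = i then n - 1 else 0) = i)
    (hboundary : ∀ p : Fin 3 → ℕ, (∑ i, p i) = n - 1 → ∀ i : Fin 3, p i = 0 → color p ≠ i) :
    ∃ p q r : Fin 3 → ℕ,
      (∑ i, p i) = n - 1 ∧ (∑ i, q i) = n - 1 ∧ (∑ i, r i) = n - 1 ∧
      SpAdj p q ∧ SpAdj q r ∧ SpAdj p r ∧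
      color p ≠ color q ∧ color q ≠ color r ∧ color p ≠ color r := by
  obtain ⟨m, hm⟩ : ∃ m, m = n - 1 := ⟨n - 1, rfl⟩
  rw [← hm] at hcorner hboundary ⊢
  have hsum3 : ∀ x y z : ℕ, (∑ i, (![x, y, z] : Fin 3 → ℕ) i) = x + y + z := by
    intro x y z
    simp [Fin.sum_univ_three]
  by_cases hm0 : m = 0
  · exfalso
    subst hm0
    have h0 := hcorner 0
    have h1 := hcorner 1
    have hf : (fun j : Fin 3 => if j = (0:Fin 3) then 0 else 0)
        = (fun j : Fin 3 => if j = (1:Fin 3) then 0 else 0) := by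
      funext j
      simp
    rw [hf] at h0
    exact absurd (h0.symm.trans h1) (by decide)
  · have hm1 : 1 ≤ m := by omega
    have c0 : color ![m, 0, m - m - 0] = 0 := by
      have : (![m, 0, m - m - 0] : Fin 3 → ℕ) = fun j => if j = 0 then m else 0 := by
        funext j
        fin_cases j <;> simp
      rw [this]
      exact hcorner 0
    have c1 : color ![0, m, m - 0 - m] = 1 := by
      have : (![0, m, m - 0 - m] : Fin 3 → ℕ) = fun j => if j = 1 then m else 0 := by
        funext j
        fin_cases j <;> simp
      rw [this]
      exact hcorner 1
    have b1 : ∀ a, a ≤ m → color ![a, 0, m - a - 0] ≠ 1 := by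
      intro a ha
      exact hboundary _ (by rw [hsum3]; omega) 1 (by simp)
    have b0 : ∀ b, b ≤ m → color ![0, b, m - 0 - b] ≠ 0 := by
      intro b hb
      exact hboundary _ (by rw [hsum3]; omega) 0 (by simp)
    have b2 : ∀ a, a ≤ m → color ![a, m - a, m - a - (m - a)] ≠ 2 := by
      intro a ha
      exact hboundary _ (by rw [hsum3]; omega) 2 (by simp)
    rcases SpernerAux.aux m hm1 (fun a b => color ![a, b, m - a - b]) c0 c1 b1 b0 b2 with
      ⟨a, b, hab, h1, h2, h3⟩ | ⟨a, b, hab, h1, h2, h3⟩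
    · -- upward triangle: (a,b), (a+1,b), (a,b+1)
      refine ⟨![a, b, m - a - b], ![a+1, b, m - (a+1) - b], ![a, b+1, m - a - (b+1)],
        by rw [hsum3]; omega, by rw [hsum3]; omega, by rw [hsum3]; omega, ?_, ?_, ?_, h1, h2, h3⟩
      · exact ⟨0, 2, by decide, by simp, by simp; omega,
          fun k hk0 hk2 => by fin_cases k <;> simp_all⟩
      · exact ⟨1, 0, by decide, by simp, by simp, fun k hk0 hk2 => by
          fin_cases k <;> simp_all <;> omega⟩
      · exact ⟨1, 2, by decide, by simp, by simp; omega,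
          fun k hk0 hk2 => by fin_cases k <;> simp_all⟩
    · -- downward triangle: (a+1,b), (a,b+1), (a+1,b+1)
      refine ⟨![a+1, b, m - (a+1) - b], ![a, b+1, m - a - (b+1)],
        ![a+1, b+1, m - (a+1) - (b+1)],
        by rw [hsum3]; omega, by rw [hsum3]; omega, by rw [hsum3]; omega, ?_, ?_, ?_, h1, h2, h3⟩
      · exact ⟨1, 0, by decide, by simp, by simp, fun k hk0 hk2 => by
          fin_cases k <;> simp_all <;> omega⟩
      · exact ⟨0, 2, by decide, by simp, by simp; omega,
          fun k hk0 hk2 => by fin_cases k <;> simp_all⟩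
      · exact ⟨1, 2, by decide, by simp, by simp; omega,
          fun k hk0 hk2 => by fin_cases k <;> simp_all⟩
end

section
/- On a Sperner triangle of any size n with a Sperner boundary coloring, the number of small triangles whose three vertices receive all three distinct colors is odd. -/
open scoped Classical

namespace Sper

open Finset

lemma fin3_cases (m : Fin 3) : m = 0 ∨ m = 1 ∨ m = 2 := by
  have h : ∀ m : Fin 3, m = 0 ∨ m = 1 ∨ m = 2 := by decide
  exact h m

variable {n : ℕ}

def vv (x : Fin 3 → Fin n) : Fin 3 → ℕ := fun m => (x m : ℕ)

def onSimp (n : ℕ) (x : Fin 3 → Fin n) : Prop := (∑ i, (x i : ℕ)) = n - 1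

lemma onSimp_iff (x : Fin 3 → Fin n) : onSimp n x ↔ vv x 0 + vv x 1 + vv x 2 = n - 1 := by
  unfold onSimp vv
  rw [Fin.sum_univ_three]

noncomputable def AllTri (n : ℕ) : Finset (Finset (Fin 3 → Fin n)) :=
  ((Finset.univ : Finset (Fin 3 → Fin n)).powersetCard 3).filter (fun s =>
    (∀ f ∈ s, onSimp n f) ∧ (∀ f ∈ s, ∀ g ∈ s, f ≠ g → SpAdj (vv f) (vv g)))

noncomputable def ESet (n : ℕ) (color : (Fin 3 → Fin n) → Fin 3) :
    Finset ((Fin 3 → Fin n) × (Fin 3 → Fin n)) :=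
  (Finset.univ : Finset ((Fin 3 → Fin n) × (Fin 3 → Fin n))).filter (fun e =>
    onSimp n e.1 ∧ SpAdj (vv e.1) (vv e.2) ∧ color e.1 = 0 ∧ color e.2 = 1)

noncomputable def dd (color : (Fin 3 → Fin n) → Fin 3) (s : Finset (Fin 3 → Fin n)) : ℕ :=
  (s.filter (fun f => color f = 0)).card * (s.filter (fun f => color f = 1)).card

lemma mem_AllTri {T : Finset (Fin 3 → Fin n)} : T ∈ AllTri n ↔
    T.card = 3 ∧ (∀ f ∈ T, onSimp n f) ∧ (∀ f ∈ T, ∀ g ∈ T, f ≠ g → SpAdj (vv f) (vv g)) := by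
  unfold AllTri
  rw [mem_filter, mem_powersetCard_univ]

lemma key_arith (a b c : ℕ) (h : a + b + c = 3) :
    a * b % 2 = if 0 < a ∧ 0 < b ∧ 0 < c then 1 else 0 := by
  have ha : a ≤ 3 := by omega
  have hb : b ≤ 3 := by omega
  interval_cases a <;> interval_cases b <;> split_ifs <;> omega

lemma parity1 (color : (Fin 3 → Fin n) → Fin 3) (s : Finset (Fin 3 → Fin n)) (hs : s.card = 3) :
    dd color s % 2 = if s.image color = Finset.univ then 1 else 0 := by
  have hsum : ∑ b : Fin 3, (s.filter (fun f => color f = b)).card = 3 := by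
    have h := (Finset.card_eq_sum_card_fiberwise
      (s := s) (f := color) (t := Finset.univ) (fun x _ => mem_univ (color x)))
    rw [hs] at h
    exact h.symm
  rw [Fin.sum_univ_three] at hsum
  have himg : s.image color = Finset.univ ↔
      (∀ b : Fin 3, 0 < (s.filter (fun f => color f = b)).card) := by
    rw [Finset.eq_univ_iff_forall]
    constructor
    · intro h b
      rcases Finset.mem_image.mp (h b) with ⟨a, ha, hab⟩
      exact Finset.card_pos.mpr ⟨a, Finset.mem_filter.mpr ⟨ha, hab⟩⟩
    · intro h b
      rcases Finset.card_pos.mp (h b) with ⟨a, ha⟩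
      rcases Finset.mem_filter.mp ha with ⟨ha1, ha2⟩
      exact Finset.mem_image.mpr ⟨a, ha1, ha2⟩
  unfold dd
  rw [key_arith _ _ _ hsum]
  by_cases hI : s.image color = Finset.univ
  · rw [if_pos hI, if_pos ⟨himg.mp hI 0, himg.mp hI 1, himg.mp hI 2⟩]
  · rw [if_neg hI, if_neg (fun hq => hI (himg.mpr (fun b => by
      rcases fin3_cases b with rfl|rfl|rfl <;> tauto)))]

lemma ne_of_colors {color : (Fin 3 → Fin n) → Fin 3} {a b : Fin 3 → Fin n}
    (ha : color a = 0) (hb : color b = 1) : a ≠ b := by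
  intro h; rw [h, hb] at ha; exact absurd ha (by decide)

lemma step2 (color : (Fin 3 → Fin n) → Fin 3) :
    ∑ T ∈ AllTri n, dd color T =
      ∑ e ∈ ESet n color, ((AllTri n).filter (fun T => e.1 ∈ T ∧ e.2 ∈ T)).card := by
  have key : ∀ T ∈ AllTri n, dd color T =
      ((ESet n color).filter (fun e => e.1 ∈ T ∧ e.2 ∈ T)).card := by
    intro T hT
    rcases mem_AllTri.mp hT with ⟨hc, hsimp, hadjp⟩
    have hset : (ESet n color).filter (fun e => e.1 ∈ T ∧ e.2 ∈ T) =
        (T.filter (fun f => color f = 0)) ×ˢ (T.filter (fun f => color f = 1)) := by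
      ext e
      rw [Finset.mem_filter, Finset.mem_product, Finset.mem_filter, Finset.mem_filter]
      unfold ESet
      rw [Finset.mem_filter]
      constructor
      · rintro ⟨⟨-, -, -, hc0, hc1⟩, h1, h2⟩
        exact ⟨⟨h1, hc0⟩, ⟨h2, hc1⟩⟩
      · rintro ⟨⟨h1, hc0⟩, ⟨h2, hc1⟩⟩
        exact ⟨⟨Finset.mem_univ _, hsimp _ h1,
          hadjp _ h1 _ h2 (ne_of_colors hc0 hc1), hc0, hc1⟩, h1, h2⟩
    unfold dd
    rw [hset, Finset.card_product]
  rw [Finset.sum_congr rfl key]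
  simp only [Finset.card_filter]
  exact Finset.sum_comm


lemma perm2 : ∀ i j : Fin 3, i ≠ j →
    (i = 0 ∧ j = 1) ∨ (i = 0 ∧ j = 2) ∨ (i = 1 ∧ j = 0) ∨ (i = 1 ∧ j = 2) ∨
    (i = 2 ∧ j = 0) ∨ (i = 2 ∧ j = 1) := by decide

lemma perm3 : ∀ i j k : Fin 3, i ≠ j → k ≠ i → k ≠ j →
    (i = 0 ∧ j = 1 ∧ k = 2) ∨ (i = 0 ∧ j = 2 ∧ k = 1) ∨ (i = 1 ∧ j = 0 ∧ k = 2) ∨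
    (i = 1 ∧ j = 2 ∧ k = 0) ∨ (i = 2 ∧ j = 0 ∧ k = 1) ∨ (i = 2 ∧ j = 1 ∧ k = 0) := by decide

lemma mem3 : ∀ i j k m : Fin 3, i ≠ j → k ≠ i → k ≠ j → m = i ∨ m = j ∨ m = k := by decide

lemma spAdj_iff (p q : Fin 3 → ℕ) : SpAdj p q ↔
    (q 0 = p 0 + 1 ∧ p 1 = q 1 + 1 ∧ p 2 = q 2) ∨
    (q 0 = p 0 + 1 ∧ p 2 = q 2 + 1 ∧ p 1 = q 1) ∨
    (q 1 = p 1 + 1 ∧ p 0 = q 0 + 1 ∧ p 2 = q 2) ∨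
    (q 1 = p 1 + 1 ∧ p 2 = q 2 + 1 ∧ p 0 = q 0) ∨
    (q 2 = p 2 + 1 ∧ p 0 = q 0 + 1 ∧ p 1 = q 1) ∨
    (q 2 = p 2 + 1 ∧ p 1 = q 1 + 1 ∧ p 0 = q 0) := by
  constructor
  · rintro ⟨i, j, hij, h1, h2, h3⟩
    rcases perm2 i j hij with ⟨rfl, rfl⟩|⟨rfl, rfl⟩|⟨rfl, rfl⟩|⟨rfl, rfl⟩|⟨rfl, rfl⟩|⟨rfl, rfl⟩
    · exact Or.inl ⟨h1, h2, h3 2 (by decide) (by decide)⟩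
    · exact Or.inr (Or.inl ⟨h1, h2, h3 1 (by decide) (by decide)⟩)
    · exact Or.inr (Or.inr (Or.inl ⟨h1, h2, h3 2 (by decide) (by decide)⟩))
    · exact Or.inr (Or.inr (Or.inr (Or.inl ⟨h1, h2, h3 0 (by decide) (by decide)⟩)))
    · exact Or.inr (Or.inr (Or.inr (Or.inr (Or.inl ⟨h1, h2, h3 1 (by decide) (by decide)⟩))))
    · exact Or.inr (Or.inr (Or.inr (Or.inr (Or.inr ⟨h1, h2, h3 0 (by decide) (by decide)⟩))))
  · rintro (⟨h1,h2,h3⟩|⟨h1,h2,h3⟩|⟨h1,h2,h3⟩|⟨h1,h2,h3⟩|⟨h1,h2,h3⟩|⟨h1,h2,h3⟩)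
    · exact ⟨0, 1, by decide, h1, h2, fun m hm1 hm2 => by
        rcases fin3_cases m with rfl|rfl|rfl <;>
          first | exact h3 | exact absurd rfl hm1 | exact absurd rfl hm2⟩
    · exact ⟨0, 2, by decide, h1, h2, fun m hm1 hm2 => by
        rcases fin3_cases m with rfl|rfl|rfl <;>
          first | exact h3 | exact absurd rfl hm1 | exact absurd rfl hm2⟩
    · exact ⟨1, 0, by decide, h1, h2, fun m hm1 hm2 => by
        rcases fin3_cases m with rfl|rfl|rfl <;>
          first | exact h3 | exact absurd rfl hm1 | exact absurd rfl hm2⟩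
    · exact ⟨1, 2, by decide, h1, h2, fun m hm1 hm2 => by
        rcases fin3_cases m with rfl|rfl|rfl <;>
          first | exact h3 | exact absurd rfl hm1 | exact absurd rfl hm2⟩
    · exact ⟨2, 0, by decide, h1, h2, fun m hm1 hm2 => by
        rcases fin3_cases m with rfl|rfl|rfl <;>
          first | exact h3 | exact absurd rfl hm1 | exact absurd rfl hm2⟩
    · exact ⟨2, 1, by decide, h1, h2, fun m hm1 hm2 => by
        rcases fin3_cases m with rfl|rfl|rfl <;>
          first | exact h3 | exact absurd rfl hm1 | exact absurd rfl hm2⟩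

lemma spAdj_symm {p q : Fin 3 → ℕ} (h : SpAdj p q) : SpAdj q p := by
  obtain ⟨i, j, hij, h1, h2, h3⟩ := h
  exact ⟨j, i, hij.symm, h2, h1, fun k hk1 hk2 => (h3 k hk2 hk1).symm⟩

lemma spAdj_sum {p q : Fin 3 → ℕ} (h : SpAdj p q) : p 0 + p 1 + p 2 = q 0 + q 1 + q 2 := by
  rw [spAdj_iff] at h
  rcases h with ⟨a,b,c⟩|⟨a,b,c⟩|⟨a,b,c⟩|⟨a,b,c⟩|⟨a,b,c⟩|⟨a,b,c⟩ <;> omega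

lemma spAdj_irrefl (p : Fin 3 → ℕ) : ¬ SpAdj p p := by
  rw [spAdj_iff]
  rintro (⟨a,b,c⟩|⟨a,b,c⟩|⟨a,b,c⟩|⟨a,b,c⟩|⟨a,b,c⟩|⟨a,b,c⟩) <;> omega

lemma classify {x y r : Fin 3 → ℕ} (i j k : Fin 3) (hij : i ≠ j) (hki : k ≠ i) (hkj : k ≠ j)
    (h1 : y i = x i + 1) (h2 : x j = y j + 1) (h3 : x k = y k)
    (hxr : SpAdj x r) (hyr : SpAdj y r) :
    (r i = x i + 1 ∧ r j = x j ∧ r k + 1 = x k) ∨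
    (r i = x i ∧ r j + 1 = x j ∧ r k = x k + 1) := by
  rw [spAdj_iff] at hxr hyr
  rcases perm3 i j k hij hki hkj with ⟨rfl,rfl,rfl⟩|⟨rfl,rfl,rfl⟩|⟨rfl,rfl,rfl⟩|⟨rfl,rfl,rfl⟩|⟨rfl,rfl,rfl⟩|⟨rfl,rfl,rfl⟩ <;>
    rcases hxr with ⟨a,b,c⟩|⟨a,b,c⟩|⟨a,b,c⟩|⟨a,b,c⟩|⟨a,b,c⟩|⟨a,b,c⟩ <;>
    rcases hyr with ⟨d,e,f⟩|⟨d,e,f⟩|⟨d,e,f⟩|⟨d,e,f⟩|⟨d,e,f⟩|⟨d,e,f⟩ <;>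
    omega


lemma exists_thd : ∀ i j : Fin 3, i ≠ j → ∃ k : Fin 3, k ≠ i ∧ k ≠ j := by decide

lemma sum3 (g : Fin 3 → ℕ) (i j k : Fin 3) (hij : i ≠ j) (hki : k ≠ i) (hkj : k ≠ j) :
    g i + g j + g k = g 0 + g 1 + g 2 := by
  rcases perm3 i j k hij hki hkj with ⟨rfl,rfl,rfl⟩|⟨rfl,rfl,rfl⟩|⟨rfl,rfl,rfl⟩|⟨rfl,rfl,rfl⟩|⟨rfl,rfl,rfl⟩|⟨rfl,rfl,rfl⟩ <;> omega

lemma ne_of_coord {a b : Fin 3 → Fin n} (m : Fin 3) (h : vv a m ≠ vv b m) : a ≠ b :=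
  fun e => h (by rw [e])

lemma step3 (x y : Fin 3 → Fin n) (hx : onSimp n x) (hadj0 : SpAdj (vv x) (vv y)) :
    ((AllTri n).filter (fun T => x ∈ T ∧ y ∈ T)).card =
      if ∃ m, vv x m = 0 ∧ vv y m = 0 then 1 else 2 := by
  obtain ⟨i, j, hij, h1, h2, h3⟩ := hadj0
  obtain ⟨k, hki, hkj⟩ := exists_thd i j hij
  have hk3 : vv x k = vv y k := h3 k hki hkj
  have hadj : SpAdj (vv x) (vv y) := ⟨i, j, hij, h1, h2, h3⟩
  have hn1 : 1 ≤ n := by have := (x 0).is_lt; omega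
  have hsx : vv x i + vv x j + vv x k = n - 1 := by
    rw [sum3 (vv x) i j k hij hki hkj]; exact (onSimp_iff x).mp hx
  have hy : onSimp n y := by
    rw [onSimp_iff, ← spAdj_sum hadj]; exact (onSimp_iff x).mp hx
  have hxj1 : 1 ≤ vv x j := by omega
  -- the two candidate third vertices, ℕ level
  set upf : Fin 3 → ℕ := fun m => if m = i then vv x i + 1 else if m = k then vv x k - 1 else vv x m with hupf
  set dnf : Fin 3 → ℕ := fun m => if m = k then vv x k + 1 else if m = j then vv x j - 1 else vv x m with hdnf
  have hupi : upf i = vv x i + 1 := by simp [hupf]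
  have hupj : upf j = vv x j := by simp [hupf, Ne.symm hij, Ne.symm hkj]
  have hupk : upf k = vv x k - 1 := by simp [hupf, hki]
  have hdnk : dnf k = vv x k + 1 := by simp [hdnf]
  have hdnj : dnf j = vv x j - 1 := by simp [hdnf, Ne.symm hkj]
  have hdni : dnf i = vv x i := by simp [hdnf, Ne.symm hki, hij]
  have hupf_lt : ∀ m, upf m < n := by
    intro m
    rcases mem3 i j k m hij hki hkj with rfl|rfl|rfl
    · rw [hupi]; omega
    · rw [hupj]; omega
    · rw [hupk]; omega
  have hdnf_lt : ∀ m, dnf m < n := by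
    intro m
    rcases mem3 i j k m hij hki hkj with rfl|rfl|rfl
    · rw [hdni]; omega
    · rw [hdnj]; omega
    · rw [hdnk]; omega
  set Up : Fin 3 → Fin n := fun m => ⟨upf m, hupf_lt m⟩ with hUp
  set Dn : Fin 3 → Fin n := fun m => ⟨dnf m, hdnf_lt m⟩ with hDn
  have hvvUp : vv Up = upf := rfl
  have hvvDn : vv Dn = dnf := rfl
  -- adjacencies
  have adjxUp : 1 ≤ vv x k → SpAdj (vv x) (vv Up) := by
    intro hk1
    refine ⟨i, k, Ne.symm hki, ?_, ?_, ?_⟩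
    · rw [hvvUp, hupi]
    · rw [hvvUp, hupk]; omega
    · intro m hm1 hm2
      rcases mem3 i j k m hij hki hkj with rfl|rfl|rfl
      · exact absurd rfl hm1
      · rw [hvvUp, hupj]
      · exact absurd rfl hm2
  have adjyUp : 1 ≤ vv x k → SpAdj (vv y) (vv Up) := by
    intro hk1
    refine ⟨j, k, Ne.symm hkj, ?_, ?_, ?_⟩
    · rw [hvvUp, hupj]; exact h2
    · rw [hvvUp, hupk]; omega
    · intro m hm1 hm2
      rcases mem3 i j k m hij hki hkj with rfl|rfl|rfl
      · rw [hvvUp, hupi]; omega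
      · exact absurd rfl hm1
      · exact absurd rfl hm2
  have adjxDn : SpAdj (vv x) (vv Dn) := by
    refine ⟨k, j, hkj, ?_, ?_, ?_⟩
    · rw [hvvDn, hdnk]
    · rw [hvvDn, hdnj]; omega
    · intro m hm1 hm2
      rcases mem3 i j k m hij hki hkj with rfl|rfl|rfl
      · rw [hvvDn, hdni]
      · exact absurd rfl hm2
      · exact absurd rfl hm1
  have adjyDn : SpAdj (vv y) (vv Dn) := by
    refine ⟨k, i, hki, ?_, ?_, ?_⟩
    · rw [hvvDn, hdnk]; omega
    · rw [hvvDn, hdni]; omega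
    · intro m hm1 hm2
      rcases mem3 i j k m hij hki hkj with rfl|rfl|rfl
      · exact absurd rfl hm2
      · rw [hvvDn, hdnj]; omega
      · exact absurd rfl hm1
  -- distinctness
  have hxyne : x ≠ y := ne_of_coord i (by omega)
  have hxUp : x ≠ Up := ne_of_coord i (by rw [hvvUp, hupi]; omega)
  have hyUp : y ≠ Up := ne_of_coord j (by rw [hvvUp, hupj]; omega)
  have hxDn : x ≠ Dn := ne_of_coord k (by rw [hvvDn, hdnk]; omega)
  have hyDn : y ≠ Dn := ne_of_coord i (by rw [hvvDn, hdni]; omega)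
  have hUpDn : Up ≠ Dn := ne_of_coord k (by rw [hvvUp, hvvDn, hupk, hdnk]; omega)
  -- membership of the two candidate triangles
  have hTD : ({x, y, Dn} : Finset (Fin 3 → Fin n)) ∈ AllTri n := by
    rw [mem_AllTri]
    refine ⟨Finset.card_eq_three.mpr ⟨x, y, Dn, hxyne, hxDn, hyDn, rfl⟩, ?_, ?_⟩
    · intro f hf
      simp only [Finset.mem_insert, Finset.mem_singleton] at hf
      rcases hf with rfl|rfl|rfl
      · exact hx
      · exact hy
      · rw [onSimp_iff, hvvDn, ← sum3 dnf i j k hij hki hkj, hdni, hdnj, hdnk]; omega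
    · have a1 := adjxDn
      have a1' := spAdj_symm adjxDn
      have a2 := adjyDn
      have a2' := spAdj_symm adjyDn
      have a3 := hadj
      have a3' := spAdj_symm hadj
      intro f hf g hg hfg
      simp only [Finset.mem_insert, Finset.mem_singleton] at hf hg
      rcases hf with rfl|rfl|rfl <;> rcases hg with rfl|rfl|rfl <;>
        first | exact absurd rfl hfg | assumption
  have hTU : 1 ≤ vv x k → ({x, y, Up} : Finset (Fin 3 → Fin n)) ∈ AllTri n := by
    intro hk1
    rw [mem_AllTri]
    refine ⟨Finset.card_eq_three.mpr ⟨x, y, Up, hxyne, hxUp, hyUp, rfl⟩, ?_, ?_⟩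
    · intro f hf
      simp only [Finset.mem_insert, Finset.mem_singleton] at hf
      rcases hf with rfl|rfl|rfl
      · exact hx
      · exact hy
      · rw [onSimp_iff, hvvUp, ← sum3 upf i j k hij hki hkj, hupi, hupj, hupk]; omega
    · have a1 := adjxUp hk1
      have a1' := spAdj_symm (adjxUp hk1)
      have a2 := adjyUp hk1
      have a2' := spAdj_symm (adjyUp hk1)
      have a3 := hadj
      have a3' := spAdj_symm hadj
      intro f hf g hg hfg
      simp only [Finset.mem_insert, Finset.mem_singleton] at hf hg
      rcases hf with rfl|rfl|rfl <;> rcases hg with rfl|rfl|rfl <;>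
        first | exact absurd rfl hfg | assumption
  -- classification of triangles containing the edge
  have hclass : ∀ T ∈ (AllTri n).filter (fun T => x ∈ T ∧ y ∈ T),
      (1 ≤ vv x k ∧ T = {x, y, Up}) ∨ T = {x, y, Dn} := by
    intro T hT
    rw [Finset.mem_filter] at hT
    obtain ⟨hTA, hxT, hyT⟩ := hT
    rcases mem_AllTri.mp hTA with ⟨hc3, hsimpT, hadjT⟩
    have hsub : ({x, y} : Finset _) ⊆ T :=
      Finset.insert_subset_iff.mpr ⟨hxT, Finset.singleton_subset_iff.mpr hyT⟩
    have hsd : (T \ {x, y}).card = 1 := by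
      rw [Finset.card_sdiff_of_subset hsub, hc3, Finset.card_pair hxyne]
    obtain ⟨r, hr⟩ := Finset.card_eq_one.mp hsd
    have hrmem : r ∈ T \ {x, y} := by rw [hr]; exact Finset.mem_singleton_self r
    rw [Finset.mem_sdiff, Finset.mem_insert, Finset.mem_singleton] at hrmem
    obtain ⟨hrT, hrxy⟩ := hrmem
    push_neg at hrxy
    obtain ⟨hrx, hry⟩ := hrxy
    have hTeq : T = {x, y, r} := by
      refine (Finset.eq_of_subset_of_card_le ?_ ?_).symm
      · intro z hz
        simp only [Finset.mem_insert, Finset.mem_singleton] at hz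
        rcases hz with rfl|rfl|rfl
        · exact hxT
        · exact hyT
        · exact hrT
      · rw [hc3, Finset.card_eq_three.mpr ⟨x, y, r, hxyne, Ne.symm hrx, Ne.symm hry, rfl⟩]
    have hxr : SpAdj (vv x) (vv r) := hadjT x hxT r hrT (Ne.symm hrx)
    have hyr : SpAdj (vv y) (vv r) := hadjT y hyT r hrT (Ne.symm hry)
    rcases classify i j k hij hki hkj h1 h2 hk3 hxr hyr with ⟨c1, c2, c3⟩ | ⟨c1, c2, c3⟩
    · left
      refine ⟨by omega, ?_⟩
      rw [hTeq]
      have : r = Up := by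
        funext m
        apply Fin.ext
        show vv r m = upf m
        rcases mem3 i j k m hij hki hkj with rfl|rfl|rfl
        · rw [hupi]; exact c1
        · rw [hupj]; exact c2
        · rw [hupk]; omega
      rw [this]
    · right
      rw [hTeq]
      have : r = Dn := by
        funext m
        apply Fin.ext
        show vv r m = dnf m
        rcases mem3 i j k m hij hki hkj with rfl|rfl|rfl
        · rw [hdni]; exact c1
        · rw [hdnj]; omega
        · rw [hdnk]; exact c3
      rw [this]
  by_cases hB : ∃ m, vv x m = 0 ∧ vv y m = 0
  · rw [if_pos hB]
    obtain ⟨m, hm1, hm2⟩ := hB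
    have hxk0 : vv x k = 0 := by
      rcases mem3 i j k m hij hki hkj with rfl|rfl|rfl <;> omega
    have hfil : (AllTri n).filter (fun T => x ∈ T ∧ y ∈ T) = {({x, y, Dn} : Finset _)} := by
      apply Finset.Subset.antisymm
      · intro T hT
        rcases hclass T hT with ⟨hk1, _⟩ | hTeq
        · omega
        · exact Finset.mem_singleton.mpr hTeq
      · rw [Finset.singleton_subset_iff, Finset.mem_filter]
        exact ⟨hTD, Finset.mem_insert_self _ _, by simp⟩
    rw [hfil, Finset.card_singleton]
  · rw [if_neg hB]
    have hk1 : 1 ≤ vv x k := by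
      by_contra hcon
      push_neg at hcon
      exact hB ⟨k, by omega, by omega⟩
    have hfil : (AllTri n).filter (fun T => x ∈ T ∧ y ∈ T) =
        {({x, y, Up} : Finset _), ({x, y, Dn} : Finset _)} := by
      apply Finset.Subset.antisymm
      · intro T hT
        rcases hclass T hT with ⟨-, hTeq⟩ | hTeq
        · exact Finset.mem_insert.mpr (Or.inl hTeq)
        · exact Finset.mem_insert.mpr (Or.inr (Finset.mem_singleton.mpr hTeq))
      · rw [Finset.insert_subset_iff, Finset.singleton_subset_iff, Finset.mem_filter,
          Finset.mem_filter]
        exact ⟨⟨hTU hk1, Finset.mem_insert_self _ _, by simp⟩,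
          ⟨hTD, Finset.mem_insert_self _ _, by simp⟩⟩
    rw [hfil]
    rw [Finset.card_insert_of_notMem, Finset.card_singleton]
    rw [Finset.mem_singleton]
    intro hcon
    have : Up ∈ ({x, y, Dn} : Finset (Fin 3 → Fin n)) := by rw [← hcon]; simp
    simp only [Finset.mem_insert, Finset.mem_singleton] at this
    rcases this with h'|h'|h'
    · exact hxUp h'.symm
    · exact hyUp h'.symm
    · exact hUpDn h'

noncomputable def seg (n : ℕ) (hn : 1 ≤ n) (t : ℕ) : Fin 3 → Fin n := fun m =>
  if m = 0 then ⟨min t (n-1), by omega⟩ else if m = 1 then ⟨n - 1 - t, by omega⟩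
    else ⟨0, by omega⟩

lemma seg0 (hn : 1 ≤ n) (t : ℕ) : vv (seg n hn t) 0 = min t (n-1) := by simp [seg, vv]
lemma seg1 (hn : 1 ≤ n) (t : ℕ) : vv (seg n hn t) 1 = n - 1 - t := by simp [seg, vv]
lemma seg2 (hn : 1 ≤ n) (t : ℕ) : vv (seg n hn t) 2 = 0 := by simp [seg, vv]

lemma seg_onSimp (hn : 1 ≤ n) {t : ℕ} (ht : t ≤ n - 1) : onSimp n (seg n hn t) := by
  rw [onSimp_iff, seg0, seg1, seg2]; omega

lemma bedge (hn : 1 ≤ n) (color : (Fin 3 → Fin n) → Fin 3)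
    (hboundary : ∀ f : Fin 3 → Fin n, (∑ i, (f i : ℕ)) = n - 1 →
      ∀ i : Fin 3, (f i : ℕ) = 0 → color f ≠ i)
    (x y : Fin 3 → Fin n) (hx : onSimp n x) (hadj0 : SpAdj (vv x) (vv y))
    (hc0 : color x = 0) (hc1 : color y = 1)
    (hB : ∃ m, vv x m = 0 ∧ vv y m = 0) :
    ∃ t, t < n - 1 ∧ min (vv x 0) (vv y 0) = t ∧
      ((x = seg n hn t ∧ y = seg n hn (t+1)) ∨ (x = seg n hn (t+1) ∧ y = seg n hn t)) := by
  obtain ⟨i, j, hij, h1, h2, h3⟩ := hadj0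
  have hadj : SpAdj (vv x) (vv y) := ⟨i, j, hij, h1, h2, h3⟩
  have hy : onSimp n y := by
    rw [onSimp_iff, ← spAdj_sum hadj]; exact (onSimp_iff x).mp hx
  obtain ⟨m, hm1, hm2⟩ := hB
  have hx0 : vv x 0 ≠ 0 := fun h => (hboundary x hx 0 h) hc0
  have hy1 : vv y 1 ≠ 0 := fun h => (hboundary y hy 1 h) hc1
  have hmi : m ≠ i := by rintro rfl; omega
  have hmj : m ≠ j := by rintro rfl; omega
  have hm0 : m ≠ 0 := by rintro rfl; exact hx0 hm1
  have hm1' : m ≠ 1 := by rintro rfl; exact hy1 hm2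
  have hmeq : m = 2 := by
    rcases fin3_cases m with rfl|rfl|rfl
    · exact absurd rfl hm0
    · exact absurd rfl hm1'
    · rfl
  subst hmeq
  have hi2 : i ≠ 2 := Ne.symm hmi
  have hj2 : j ≠ 2 := Ne.symm hmj
  have hsx : vv x 0 + vv x 1 + vv x 2 = n - 1 := (onSimp_iff x).mp hx
  have hsy : vv y 0 + vv y 1 + vv y 2 = n - 1 := (onSimp_iff y).mp hy
  rcases perm2 i j hij with ⟨rfl, rfl⟩|⟨rfl, rfl⟩|⟨rfl, rfl⟩|⟨rfl, rfl⟩|⟨rfl, rfl⟩|⟨rfl, rfl⟩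
  · refine ⟨vv x 0, by omega, by omega, Or.inl ⟨?_, ?_⟩⟩
    · funext m
      apply Fin.ext
      show vv x m = vv (seg n hn (vv x 0)) m
      rcases fin3_cases m with rfl|rfl|rfl
      · rw [seg0]; omega
      · rw [seg1]; omega
      · rw [seg2]; omega
    · funext m
      apply Fin.ext
      show vv y m = vv (seg n hn (vv x 0 + 1)) m
      rcases fin3_cases m with rfl|rfl|rfl
      · rw [seg0]; omega
      · rw [seg1]; omega
      · rw [seg2]; omega
  · exact absurd rfl hj2
  · refine ⟨vv y 0, by omega, by omega, Or.inr ⟨?_, ?_⟩⟩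
    · funext m
      apply Fin.ext
      show vv x m = vv (seg n hn (vv y 0 + 1)) m
      rcases fin3_cases m with rfl|rfl|rfl
      · rw [seg0]; omega
      · rw [seg1]; omega
      · rw [seg2]; omega
    · funext m
      apply Fin.ext
      show vv y m = vv (seg n hn (vv y 0)) m
      rcases fin3_cases m with rfl|rfl|rfl
      · rw [seg0]; omega
      · rw [seg1]; omega
      · rw [seg2]; omega
  · exact absurd rfl hj2
  · exact absurd rfl hi2
  · exact absurd rfl hi2

lemma stepD (hn : 1 ≤ n) (color : (Fin 3 → Fin n) → Fin 3)
    (hboundary : ∀ f : Fin 3 → Fin n, (∑ i, (f i : ℕ)) = n - 1 →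
      ∀ i : Fin 3, (f i : ℕ) = 0 → color f ≠ i) :
    ((ESet n color).filter (fun e => ∃ m, vv e.1 m = 0 ∧ vv e.2 m = 0)).card =
    ((Finset.range (n-1)).filter (fun t =>
      (color (seg n hn t) = 0 ∧ color (seg n hn (t+1)) = 1) ∨
      (color (seg n hn t) = 1 ∧ color (seg n hn (t+1)) = 0))).card := by
  apply Finset.card_bij (fun e _ => min (vv e.1 0) (vv e.2 0))
  · intro e he
    rw [Finset.mem_filter] at he
    obtain ⟨heE, hB⟩ := he
    unfold ESet at heE
    rw [Finset.mem_filter] at heE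
    obtain ⟨-, hx, hadj, hc0, hc1⟩ := heE
    obtain ⟨t, ht, hmin, hor⟩ := bedge hn color hboundary e.1 e.2 hx hadj hc0 hc1 hB
    rw [hmin, Finset.mem_filter, Finset.mem_range]
    refine ⟨ht, ?_⟩
    rcases hor with ⟨he1, he2⟩|⟨he1, he2⟩
    · exact Or.inl ⟨he1 ▸ hc0, he2 ▸ hc1⟩
    · exact Or.inr ⟨he2 ▸ hc1, he1 ▸ hc0⟩
  · intro e1 he1 e2 he2 heq
    rw [Finset.mem_filter] at he1 he2
    obtain ⟨he1E, hB1⟩ := he1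
    obtain ⟨he2E, hB2⟩ := he2
    unfold ESet at he1E he2E
    rw [Finset.mem_filter] at he1E he2E
    obtain ⟨-, hx1, hadj1, hc01, hc11⟩ := he1E
    obtain ⟨-, hx2, hadj2, hc02, hc12⟩ := he2E
    obtain ⟨t1, ht1, hmin1, hor1⟩ := bedge hn color hboundary e1.1 e1.2 hx1 hadj1 hc01 hc11 hB1
    obtain ⟨t2, ht2, hmin2, hor2⟩ := bedge hn color hboundary e2.1 e2.2 hx2 hadj2 hc02 hc12 hB2
    rw [hmin1, hmin2] at heq
    subst heq
    rcases hor1 with ⟨ha1, hb1⟩|⟨ha1, hb1⟩ <;> rcases hor2 with ⟨ha2, hb2⟩|⟨ha2, hb2⟩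
    · exact Prod.ext (by rw [ha1, ha2]) (by rw [hb1, hb2])
    · exfalso
      rw [ha1] at hc01
      rw [hb2] at hc12
      rw [hc01] at hc12
      exact absurd hc12 (by decide)
    · exfalso
      rw [hb1] at hc11
      rw [ha2] at hc02
      rw [hc02] at hc11
      exact absurd hc11 (by decide)
    · exact Prod.ext (by rw [ha1, ha2]) (by rw [hb1, hb2])
  · intro t ht
    rw [Finset.mem_filter, Finset.mem_range] at ht
    obtain ⟨htN, hcase⟩ := ht
    have hadj01 : SpAdj (vv (seg n hn t)) (vv (seg n hn (t+1))) := by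
      refine ⟨0, 1, by decide, ?_, ?_, ?_⟩
      · rw [seg0, seg0]; omega
      · rw [seg1, seg1]; omega
      · intro m hm0 hm1
        rcases fin3_cases m with rfl|rfl|rfl
        · exact absurd rfl hm0
        · exact absurd rfl hm1
        · rw [seg2, seg2]
    have hadj10 : SpAdj (vv (seg n hn (t+1))) (vv (seg n hn t)) := spAdj_symm hadj01
    rcases hcase with ⟨hcA, hcB⟩|⟨hcA, hcB⟩
    · refine ⟨(seg n hn t, seg n hn (t+1)), ?_, ?_⟩
      · rw [Finset.mem_filter]
        constructor
        · unfold ESet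
          rw [Finset.mem_filter]
          exact ⟨Finset.mem_univ _, seg_onSimp hn (by omega), hadj01, hcA, hcB⟩
        · exact ⟨2, seg2 hn t, seg2 hn (t+1)⟩
      · show min (vv (seg n hn t) 0) (vv (seg n hn (t+1)) 0) = t
        rw [seg0, seg0]; omega
    · refine ⟨(seg n hn (t+1), seg n hn t), ?_, ?_⟩
      · rw [Finset.mem_filter]
        constructor
        · unfold ESet
          rw [Finset.mem_filter]
          exact ⟨Finset.mem_univ _, seg_onSimp hn (by omega), hadj10, hcB, hcA⟩
        · exact ⟨2, seg2 hn (t+1), seg2 hn t⟩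
      · show min (vv (seg n hn (t+1)) 0) (vv (seg n hn t) 0) = t
        rw [seg0, seg0]; omega

lemma oneD (c : ℕ → Fin 3) : ∀ M : ℕ, (∀ t, t ≤ M → c t ≠ 2) →
    (((Finset.range M).filter (fun t =>
      (c t = 0 ∧ c (t+1) = 1) ∨ (c t = 1 ∧ c (t+1) = 0))).card) % 2
      = if c 0 = c M then 0 else 1 := by
  intro M
  induction M with
  | zero => intro _; simp
  | succ M ih =>
    intro h
    have hM := ih (fun t ht => h t (Nat.le_succ_of_le ht))
    rw [Finset.range_add_one, Finset.filter_insert]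
    have hc0 : c 0 = 0 ∨ c 0 = 1 := by
      rcases fin3_cases (c 0) with h'|h'|h'
      · exact Or.inl h'
      · exact Or.inr h'
      · exact absurd h' (h 0 (by omega))
    have hcM : c M = 0 ∨ c M = 1 := by
      rcases fin3_cases (c M) with h'|h'|h'
      · exact Or.inl h'
      · exact Or.inr h'
      · exact absurd h' (h M (by omega))
    have hcM1 : c (M+1) = 0 ∨ c (M+1) = 1 := by
      rcases fin3_cases (c (M+1)) with h'|h'|h'
      · exact Or.inl h'
      · exact Or.inr h'
      · exact absurd h' (h (M+1) le_rfl)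
    by_cases hP : (c M = 0 ∧ c (M+1) = 1) ∨ (c M = 1 ∧ c (M+1) = 0)
    · rw [if_pos hP, Finset.card_insert_of_notMem (by simp)]
      have hiff : (c 0 = c M) ↔ ¬(c 0 = c (M+1)) := by
        rcases hc0 with h0|h0 <;> rcases hP with ⟨hA, hB⟩|⟨hA, hB⟩ <;>
          rw [h0, hA, hB] <;> decide
      by_cases hq : c 0 = c (M+1)
      · rw [if_pos hq]
        rw [if_neg (fun hh => (hiff.mp hh) hq)] at hM
        omega
      · rw [if_neg hq]
        rw [if_pos (hiff.mpr hq)] at hM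
        omega
    · rw [if_neg hP]
      have hMM1 : c M = c (M+1) := by
        rcases hcM with h'|h' <;> rcases hcM1 with h''|h''
        · rw [h', h'']
        · exact absurd (Or.inl ⟨h', h''⟩) hP
        · exact absurd (Or.inr ⟨h', h''⟩) hP
        · rw [h', h'']
      rw [hM, hMM1]

end Sper

open Sper Finset

/-- Sperner's lemma (parity): with a Sperner boundary coloring, the number of small
triangles (3-element sets of mutually adjacent board nodes) receiving all three colors
is odd. -/
theorem sperner_lemma_odd (n : ℕ) (hn : 1 ≤ n) (color : (Fin 3 → Fin n) → Fin 3)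
    (hboundary : ∀ f : Fin 3 → Fin n, (∑ i, (f i : ℕ)) = n - 1 →
      ∀ i : Fin 3, (f i : ℕ) = 0 → color f ≠ i) :
    Odd ((((Finset.univ : Finset (Fin 3 → Fin n)).powersetCard 3).filter (fun s =>
      (∀ f ∈ s, (∑ i, (f i : ℕ)) = n - 1) ∧
      (∀ f ∈ s, ∀ g ∈ s, f ≠ g → SpAdj (fun i => (f i : ℕ)) (fun i => (g i : ℕ))) ∧
      s.image color = Finset.univ)).card) := by
  classical
  have hset : (((Finset.univ : Finset (Fin 3 → Fin n)).powersetCard 3).filter (fun s =>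
      (∀ f ∈ s, (∑ i, (f i : ℕ)) = n - 1) ∧
      (∀ f ∈ s, ∀ g ∈ s, f ≠ g → SpAdj (fun i => (f i : ℕ)) (fun i => (g i : ℕ))) ∧
      s.image color = Finset.univ)) =
      (AllTri n).filter (fun s => s.image color = Finset.univ) := by
    unfold AllTri
    rw [Finset.filter_filter]
    apply Finset.filter_congr
    intro s _
    exact ⟨fun h => ⟨⟨h.1, h.2.1⟩, h.2.2⟩, fun h => ⟨h.1.1, h.1.2, h.2⟩⟩
  rw [hset]
  rw [Nat.odd_iff]
  -- step 1 : parity of tri-colored triangles = parity of the door sum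
  have h1 : ((AllTri n).filter (fun s => s.image color = Finset.univ)).card % 2
      = (∑ T ∈ AllTri n, dd color T) % 2 := by
    rw [Finset.card_filter]
    rw [Finset.sum_nat_mod (AllTri n) 2 (dd color)]
    rw [Finset.sum_congr rfl (fun T hT => (parity1 color T (mem_AllTri.mp hT).1))]
    try rw [← Finset.sum_nat_mod]
  -- step 3 : door sum = sum over 01-edges of extension counts
  have h2 : (∑ T ∈ AllTri n, dd color T) =
      ∑ e ∈ ESet n color, ((AllTri n).filter (fun T => e.1 ∈ T ∧ e.2 ∈ T)).card :=
    step2 color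
  -- step 3b : extension counts mod 2 = boundary indicator
  have h3 : (∑ e ∈ ESet n color, ((AllTri n).filter (fun T => e.1 ∈ T ∧ e.2 ∈ T)).card) % 2
      = ((ESet n color).filter (fun e => ∃ m, vv e.1 m = 0 ∧ vv e.2 m = 0)).card % 2 := by
    have e2 : ∀ e ∈ ESet n color,
        ((AllTri n).filter (fun T => e.1 ∈ T ∧ e.2 ∈ T)).card =
        if ∃ m, vv e.1 m = 0 ∧ vv e.2 m = 0 then 1 else 2 := by
      intro e he
      unfold ESet at he
      rw [Finset.mem_filter] at he
      exact step3 e.1 e.2 he.2.1 he.2.2.1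
    rw [Finset.sum_congr rfl e2]
    rw [Finset.card_filter]
    rw [Finset.sum_nat_mod (ESet n color) 2 (fun e => if ∃ m, vv e.1 m = 0 ∧ vv e.2 m = 0 then 1 else 2)]
    rw [Finset.sum_nat_mod (ESet n color) 2 (fun e => if ∃ m, vv e.1 m = 0 ∧ vv e.2 m = 0 then 1 else 0)]
    congr 1
    apply Finset.sum_congr rfl
    intro e _
    split_ifs <;> rfl
  -- step 4 : boundary edges correspond to sign changes on the bottom side
  have h4 : ((ESet n color).filter (fun e => ∃ m, vv e.1 m = 0 ∧ vv e.2 m = 0)).card =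
      ((Finset.range (n-1)).filter (fun t =>
        (color (seg n hn t) = 0 ∧ color (seg n hn (t+1)) = 1) ∨
        (color (seg n hn t) = 1 ∧ color (seg n hn (t+1)) = 0))).card :=
    stepD hn color hboundary
  -- step 5 : 1-dimensional Sperner lemma
  have hc2 : ∀ t, t ≤ n - 1 → (fun t => color (seg n hn t)) t ≠ 2 := by
    intro t ht
    exact hboundary (seg n hn t) (seg_onSimp hn ht) 2 (seg2 hn t)
  have h5 := oneD (fun t => color (seg n hn t)) (n-1) hc2
  have hc0 : color (seg n hn 0) = 1 := by
    have hb0 : color (seg n hn 0) ≠ 0 := by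
      apply hboundary (seg n hn 0) (seg_onSimp hn (by omega)) 0
      rw [show ((seg n hn 0 0 : Fin n) : ℕ) = vv (seg n hn 0) 0 from rfl, seg0]
      omega
    have hb2 : color (seg n hn 0) ≠ 2 := hc2 0 (by omega)
    rcases fin3_cases (color (seg n hn 0)) with h'|h'|h'
    · exact absurd h' hb0
    · exact h'
    · exact absurd h' hb2
  have hcN : color (seg n hn (n-1)) = 0 := by
    have hb1 : color (seg n hn (n-1)) ≠ 1 := by
      apply hboundary (seg n hn (n-1)) (seg_onSimp hn (by omega)) 1
      rw [show ((seg n hn (n-1) 1 : Fin n) : ℕ) = vv (seg n hn (n-1)) 1 from rfl, seg1]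
      omega
    have hb2 : color (seg n hn (n-1)) ≠ 2 := hc2 (n-1) (by omega)
    rcases fin3_cases (color (seg n hn (n-1))) with h'|h'|h'
    · exact h'
    · exact absurd h' hb1
    · exact absurd h' hb2
  beta_reduce at h5
  rw [hc0, hcN] at h5
  rw [if_neg (by decide)] at h5
  rw [h1, h2, h3, h4]
  exact h5
end

section
/- Suppose the vertices of the 2D grid [1,n]×[1,n] (with n ≥ 2) are colored with three colors subject to: vertices on the left boundary (x=1) get color 0, vertices on the bottom boundary except the bottom-left corner (y=1, x>1) get color 1, all remaining boundary vertices get color 2, and interior vertices are colored arbitrarily. Then there exists a unit square of the grid whose four vertices together include all three colors. -/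
/-- Indicator (mod 2) that an edge has colors `0` and `1`. -/
def eEdge (a b : Fin 3) : ZMod 2 := if (a = 0 ∧ b = 1) ∨ (a = 1 ∧ b = 0) then 1 else 0

def Hh (color : ℕ × ℕ → Fin 3) (x y : ℕ) : ZMod 2 :=
  eEdge (color (x, y)) (color (x + 1, y))

def Vv (color : ℕ × ℕ → Fin 3) (x y : ℕ) : ZMod 2 :=
  eEdge (color (x, y)) (color (x, y + 1))

lemma eEdge_key : ∀ a b c d : Fin 3, (∃ k : Fin 3, k ≠ a ∧ k ≠ b ∧ k ≠ c ∧ k ≠ d) →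
    eEdge a b + eEdge c d + eEdge a c + eEdge b d = 0 := by decide

lemma tel (f : ℕ → ZMod 2) (k : ℕ) :
    ∑ j ∈ Finset.range k, (f j + f (j + 1)) = f 0 + f k := by
  induction k with
  | zero =>
    have : ∀ x : ZMod 2, x + x = 0 := by decide
    simp [(this (f 0)).symm]
  | succ k ih =>
    rw [Finset.sum_range_succ, ih]
    have h2 : f k + f k = 0 := by
      have : ∀ x : ZMod 2, x + x = 0 := by decide
      exact this _
    linear_combination h2

/-- Discrete 2D fixed-point theorem: for the grid `[1,n]²` colored with left boundary
color `0`, bottom boundary (except the bottom-left corner) color `1`, all remaining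
boundary vertices color `2`, and interior arbitrary, there is a unit square whose four
vertices carry all three colors. -/
theorem grid_trichromatic_square (n : ℕ) (hn : 2 ≤ n) (color : ℕ × ℕ → Fin 3)
    (hleft : ∀ y, 1 ≤ y → y ≤ n → color (1, y) = 0)
    (hbottom : ∀ x, 2 ≤ x → x ≤ n → color (x, 1) = 1)
    (hrest : ∀ x y, 1 ≤ x → x ≤ n → 1 ≤ y → y ≤ n →
      (x = n ∨ y = n) → x ≠ 1 → y ≠ 1 → color (x, y) = 2) :
    ∃ x y, 1 ≤ x ∧ x + 1 ≤ n ∧ 1 ≤ y ∧ y + 1 ≤ n ∧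
      ∀ c : Fin 3, c = color (x, y) ∨ c = color (x + 1, y) ∨
        c = color (x, y + 1) ∨ c = color (x + 1, y + 1) := by
  by_contra hcon
  push_neg at hcon
  set m := n - 1 with hm
  have hmn : m + 1 = n := by omega
  have hm1 : 1 ≤ m := by omega
  -- each unit square contributes 0 mod 2
  have hsq : ∀ i j : ℕ, i < m → j < m →
      Hh color (i+1) (j+1) + Hh color (i+1) (j+2) + Vv color (i+1) (j+1) +
        Vv color (i+2) (j+1) = 0 := by
    intro i j hi hj
    obtain ⟨c, h1, h2, h3, h4⟩ := hcon (i+1) (j+1) (by omega) (by omega) (by omega) (by omega)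
    have := eEdge_key (color (i+1, j+1)) (color (i+2, j+1)) (color (i+1, j+2))
      (color (i+2, j+2)) ⟨c, h1, h2, h3, h4⟩
    simpa [Hh, Vv, show i+1+1 = i+2 from rfl, show j+1+1 = j+2 from rfl] using this
  have hT : ∑ i ∈ Finset.range m, ∑ j ∈ Finset.range m,
      (Hh color (i+1) (j+1) + Hh color (i+1) (j+2) + Vv color (i+1) (j+1) +
        Vv color (i+2) (j+1)) = 0 := by
    apply Finset.sum_eq_zero
    intro i hi
    apply Finset.sum_eq_zero
    intro j hj
    exact hsq i j (Finset.mem_range.mp hi) (Finset.mem_range.mp hj)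
  -- split into horizontal and vertical parts
  have hsplit : ∑ i ∈ Finset.range m, ∑ j ∈ Finset.range m,
      (Hh color (i+1) (j+1) + Hh color (i+1) (j+2) + Vv color (i+1) (j+1) +
        Vv color (i+2) (j+1))
      = (∑ i ∈ Finset.range m, ∑ j ∈ Finset.range m,
          (Hh color (i+1) (j+1) + Hh color (i+1) (j+2)))
        + ∑ i ∈ Finset.range m, ∑ j ∈ Finset.range m,
          (Vv color (i+1) (j+1) + Vv color (i+2) (j+1)) := by
    rw [← Finset.sum_add_distrib]
    apply Finset.sum_congr rfl
    intro i _
    rw [← Finset.sum_add_distrib]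
    apply Finset.sum_congr rfl
    intro j _
    ring
  have hA : ∑ i ∈ Finset.range m, ∑ j ∈ Finset.range m,
      (Hh color (i+1) (j+1) + Hh color (i+1) (j+2))
      = ∑ i ∈ Finset.range m, (Hh color (i+1) 1 + Hh color (i+1) n) := by
    apply Finset.sum_congr rfl
    intro i _
    have := tel (fun j => Hh color (i+1) (j+1)) m
    simp only [show ∀ j : ℕ, j + 1 + 1 = j + 2 from fun _ => rfl] at this
    rw [this, hmn]
  have hB : ∑ i ∈ Finset.range m, ∑ j ∈ Finset.range m,
      (Vv color (i+1) (j+1) + Vv color (i+2) (j+1))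
      = ∑ j ∈ Finset.range m, (Vv color 1 (j+1) + Vv color n (j+1)) := by
    rw [Finset.sum_comm]
    apply Finset.sum_congr rfl
    intro j _
    have := tel (fun i => Vv color (i+1) (j+1)) m
    simp only [show ∀ i : ℕ, i + 1 + 1 = i + 2 from fun _ => rfl] at this
    rw [this, hmn]
  -- boundary evaluations
  have hH1 : ∀ i, i < m → Hh color (i+1) 1 = if i = 0 then 1 else 0 := by
    intro i hi
    rcases Nat.eq_zero_or_pos i with h0 | h0
    · subst h0
      have e1 : color (1, 1) = 0 := hleft 1 le_rfl (by omega)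
      have e2 : color (2, 1) = 1 := hbottom 2 le_rfl (by omega)
      simp only [Hh, show (0:ℕ)+1 = 1 from rfl, show (1:ℕ)+1 = 2 from rfl, e1, e2]
      decide
    · have e1 : color (i+1, 1) = 1 := hbottom (i+1) (by omega) (by omega)
      have e2 : color (i+2, 1) = 1 := hbottom (i+2) (by omega) (by omega)
      simp only [Hh, show i+1+1 = i+2 from rfl, e1, e2]
      rw [if_neg (by omega : ¬ i = 0)]
      decide
  have hHn : ∀ i, i < m → Hh color (i+1) n = 0 := by
    intro i hi
    rcases Nat.eq_zero_or_pos i with h0 | h0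
    · subst h0
      have e1 : color (1, n) = 0 := hleft n (by omega) le_rfl
      have e2 : color (2, n) = 2 := hrest 2 n (by omega) (by omega) (by omega) le_rfl
        (Or.inr rfl) (by omega) (by omega)
      simp only [Hh, show (0:ℕ)+1 = 1 from rfl, show (1:ℕ)+1 = 2 from rfl, e1, e2]
      decide
    · have e1 : color (i+1, n) = 2 := hrest (i+1) n (by omega) (by omega) (by omega) le_rfl
        (Or.inr rfl) (by omega) (by omega)
      have e2 : color (i+2, n) = 2 := hrest (i+2) n (by omega) (by omega) (by omega) le_rfl
        (Or.inr rfl) (by omega) (by omega)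
      simp only [Hh, show i+1+1 = i+2 from rfl, e1, e2]
      decide
  have hV1 : ∀ j, j < m → Vv color 1 (j+1) = 0 := by
    intro j hj
    have e1 : color (1, j+1) = 0 := hleft (j+1) (by omega) (by omega)
    have e2 : color (1, j+2) = 0 := hleft (j+2) (by omega) (by omega)
    simp only [Vv, show j+1+1 = j+2 from rfl, e1, e2]
    decide
  have hVn : ∀ j, j < m → Vv color n (j+1) = 0 := by
    intro j hj
    rcases Nat.eq_zero_or_pos j with h0 | h0
    · subst h0
      have e1 : color (n, 1) = 1 := hbottom n hn le_rfl
      have e2 : color (n, 2) = 2 := hrest n 2 (by omega) le_rfl (by omega) (by omega)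
        (Or.inl rfl) (by omega) (by omega)
      simp only [Vv, show (0:ℕ)+1 = 1 from rfl, show (1:ℕ)+1 = 2 from rfl, e1, e2]
      decide
    · have e1 : color (n, j+1) = 2 := hrest n (j+1) (by omega) le_rfl (by omega) (by omega)
        (Or.inl rfl) (by omega) (by omega)
      have e2 : color (n, j+2) = 2 := hrest n (j+2) (by omega) le_rfl (by omega) (by omega)
        (Or.inl rfl) (by omega) (by omega)
      simp only [Vv, show j+1+1 = j+2 from rfl, e1, e2]
      decide
  have hAval : ∑ i ∈ Finset.range m, (Hh color (i+1) 1 + Hh color (i+1) n) = 1 := by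
    have : ∀ i ∈ Finset.range m, Hh color (i+1) 1 + Hh color (i+1) n
        = if i = 0 then 1 else 0 := by
      intro i hi
      rw [hH1 i (Finset.mem_range.mp hi), hHn i (Finset.mem_range.mp hi), add_zero]
    rw [Finset.sum_congr rfl this, Finset.sum_ite_eq' (Finset.range m) 0 (fun _ => (1 : ZMod 2))]
    simp [Finset.mem_range, hm1]
    omega
  have hBval : ∑ j ∈ Finset.range m, (Vv color 1 (j+1) + Vv color n (j+1)) = 0 := by
    apply Finset.sum_eq_zero
    intro j hj
    rw [hV1 j (Finset.mem_range.mp hj), hVn j (Finset.mem_range.mp hj), add_zero]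
  rw [hsplit, hA, hB, hAval, hBval] at hT
  simp at hT
end

section
/- In the 2-D Brouwer game on the grid [1,n]^2 with boundary pre-colored as in the discrete 2D fixed-point theorem (left boundary color 0, bottom boundary minus corner color 1, remaining boundary color 2), where players alternately color interior vertices and a player loses upon creating a unit square containing all three colors, the game always has a loser: if all interior vertices become colored without an earlier loss, the last player to move loses. -/
/-- count of a `{0,1}`-edge, in `ZMod 2`. -/
def badE (a b : Fin 3) : ZMod 2 :=
  if (a = 0 ∧ b = 1) ∨ (a = 1 ∧ b = 0) then 1 else 0

lemma badE_square (a b c d : Fin 3)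
    (h : ¬ ∀ e : Fin 3, e = a ∨ e = b ∨ e = c ∨ e = d) :
    badE a b + badE c d + badE a c + badE b d = 0 := by
  revert h; revert a b c d; decide

lemma badE_right2 (a : Fin 3) : badE a 2 = 0 := by revert a; decide

lemma zmod2_add_self (x : ZMod 2) : x + x = 0 := by revert x; decide

lemma tele (f : ℕ → ZMod 2) (N : ℕ) :
    ∑ i ∈ Finset.range N, (f i + f (i + 1)) = f 0 + f N := by
  induction N with
  | zero => simp; exact (zmod2_add_self (f 0)).symm
  | succ N ih =>
    rw [Finset.sum_range_succ, ih]
    linear_combination zmod2_add_self (f N)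

/-- The discrete 2D fixed point theorem, in the form of a contradiction
from the assumption that no unit square is bad. -/
lemma rows_contradiction (n : ℕ) (hn : 2 ≤ n) (col : ℕ → ℕ → Fin 3)
    (hleft : ∀ y, 1 ≤ y → y ≤ n → col 1 y = 0)
    (hbottom : ∀ x, 2 ≤ x → x ≤ n → col x 1 = 1)
    (hright : ∀ y, 2 ≤ y → y ≤ n → col n y = 2)
    (htop : ∀ x, 2 ≤ x → x ≤ n → col x n = 2)
    (hsq : ∀ x y, 1 ≤ x → x + 1 ≤ n → 1 ≤ y → y + 1 ≤ n →
      ¬ ∀ e : Fin 3, e = col x y ∨ e = col (x+1) y ∨ e = col x (y+1) ∨ e = col (x+1) (y+1)) :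
    False := by
  set H : ℕ → ZMod 2 := fun y => ∑ i ∈ Finset.range (n-1), badE (col (i+1) y) (col (i+2) y) with hH
  -- each interior row step preserves H mod 2
  have hstep : ∀ y, 1 ≤ y → y + 1 ≤ n → H (y+1) = H y := by
    intro y hy1 hy2
    have hzero : ∀ i ∈ Finset.range (n-1),
        (badE (col (i+1) y) (col (i+2) y) + badE (col (i+1) (y+1)) (col (i+2) (y+1)))
        + (badE (col (i+1) y) (col (i+1) (y+1)) + badE (col (i+2) y) (col (i+2) (y+1))) = 0 := by
      intro i hi
      rw [Finset.mem_range] at hi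
      have h1 : (i+1) + 1 ≤ n := by omega
      have := badE_square (col (i+1) y) (col (i+2) y) (col (i+1) (y+1)) (col (i+2) (y+1))
        (hsq (i+1) y (by omega) (by omega) hy1 hy2)
      linear_combination this
    have hsum : ∑ i ∈ Finset.range (n-1),
        ((badE (col (i+1) y) (col (i+2) y) + badE (col (i+1) (y+1)) (col (i+2) (y+1)))
        + (badE (col (i+1) y) (col (i+1) (y+1)) + badE (col (i+2) y) (col (i+2) (y+1)))) = 0 :=
      Finset.sum_eq_zero hzero
    rw [Finset.sum_add_distrib, Finset.sum_add_distrib] at hsum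
    have htel : ∑ i ∈ Finset.range (n-1),
        (badE (col (i+1) y) (col (i+1) (y+1)) + badE (col (i+2) y) (col (i+2) (y+1)))
        = badE (col 1 y) (col 1 (y+1)) + badE (col n y) (col n (y+1)) := by
      have := tele (fun i => badE (col (i+1) y) (col (i+1) (y+1))) (n-1)
      simpa [show n - 1 + 1 = n by omega] using this
    have hv1 : badE (col 1 y) (col 1 (y+1)) = 0 := by
      rw [hleft y hy1 (by omega), hleft (y+1) (by omega) hy2]; decide
    have hvn : badE (col n y) (col n (y+1)) = 0 := by
      rw [show col n (y+1) = 2 from hright (y+1) (by omega) hy2, badE_right2]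
    rw [htel, hv1, hvn] at hsum
    have h0 : H y + H (y+1) = 0 := by simp only [hH]; linear_combination hsum
    linear_combination h0 - zmod2_add_self (H y)
  -- chain: H is constant on rows 1..n
  have hchain : ∀ j, j ≤ n - 1 → H (1 + j) = H 1 := by
    intro j
    induction j with
    | zero => intro _; rfl
    | succ j ih =>
      intro hj
      have : 1 + (j + 1) = (1 + j) + 1 := by omega
      rw [this, hstep (1+j) (by omega) (by omega), ih (by omega)]
  have hHn : H n = H 1 := by
    have := hchain (n-1) le_rfl
    rwa [show 1 + (n-1) = n by omega] at this
  -- H 1 = 1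
  have hH1 : H 1 = 1 := by
    simp only [hH]
    rw [Finset.sum_eq_single_of_mem 0 (Finset.mem_range.mpr (by omega))]
    · rw [show (0:ℕ)+1 = 1 from rfl, show (0:ℕ)+2 = 2 from rfl,
        hleft 1 le_rfl (by omega), hbottom 2 le_rfl hn]
      decide
    · intro i hi hne
      rw [Finset.mem_range] at hi
      rw [hbottom (i+1) (by omega) (by omega), hbottom (i+2) (by omega) (by omega)]
      decide
  -- H n = 0
  have hHn0 : H n = 0 := by
    simp only [hH]
    apply Finset.sum_eq_zero
    intro i hi
    rw [Finset.mem_range] at hi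
    rw [htop (i+2) (by omega) (by omega), badE_right2]
  rw [hHn0, hH1] at hHn
  exact absurd hHn (by decide)



/-- A partial coloring of the grid contains a "bad" unit square: a unit square of
`[1,n]²` whose four (colored) vertices carry all three colors. -/
def HasBadSquare (n : ℕ) (col : ℕ × ℕ → Option (Fin 3)) : Prop :=
  ∃ x y, 1 ≤ x ∧ x + 1 ≤ n ∧ 1 ≤ y ∧ y + 1 ≤ n ∧
    ∃ a b c d : Fin 3,
      col (x, y) = some a ∧ col (x + 1, y) = some b ∧
      col (x, y + 1) = some c ∧ col (x + 1, y + 1) = some d ∧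
      ∀ e : Fin 3, e = a ∨ e = b ∨ e = c ∨ e = d

/-- The 2-D Brouwer game always has a loser: with the boundary of `[1,n]²` pre-colored
(left boundary `0`, bottom boundary minus the corner `1`, remaining boundary `2`) and
players alternately coloring interior vertices, every complete play creates a bad unit
square at some move. -/
theorem twoD_brouwer_game_has_loser (n : ℕ) (hn : 2 ≤ n)
    (c₀ : ℕ × ℕ → Option (Fin 3))
    (hleft : ∀ y, 1 ≤ y → y ≤ n → c₀ (1, y) = some 0)
    (hbottom : ∀ x, 2 ≤ x → x ≤ n → c₀ (x, 1) = some 1)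
    (hrest : ∀ x y, 1 ≤ x → x ≤ n → 1 ≤ y → y ≤ n →
      (x = n ∨ y = n) → x ≠ 1 → y ≠ 1 → c₀ (x, y) = some 2)
    (hint : ∀ x y, 1 < x → x < n → 1 < y → y < n → c₀ (x, y) = none)
    (m : ℕ) (c : ℕ → ℕ × ℕ → Option (Fin 3))
    (hstart : c 0 = c₀)
    (hstep : ∀ k < m, ∃ (x y : ℕ) (col : Fin 3), 1 < x ∧ x < n ∧ 1 < y ∧ y < n ∧
      c k (x, y) = none ∧ c (k + 1) = Function.update (c k) (x, y) (some col))
    (hfull : ∀ x y, 1 ≤ x → x ≤ n → 1 ≤ y → y ≤ n → c m (x, y) ≠ none) :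
    ∃ k ≤ m, HasBadSquare n (c k) := by
  -- the final coloring agrees with c₀ on non-interior points
  have hbound : ∀ k ≤ m, ∀ p : ℕ × ℕ, ¬(1 < p.1 ∧ p.1 < n ∧ 1 < p.2 ∧ p.2 < n) →
      c k p = c₀ p := by
    intro k
    induction k with
    | zero => intro _ p _; rw [hstart]
    | succ k ih =>
      intro hk p hp
      obtain ⟨x, y, colr, hx1, hx2, hy1, hy2, -, hupd⟩ := hstep k (by omega)
      rw [hupd, Function.update_of_ne, ih (by omega) p hp]
      rintro rfl
      exact hp ⟨hx1, hx2, hy1, hy2⟩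
  have hcm : ∀ p : ℕ × ℕ, ¬(1 < p.1 ∧ p.1 < n ∧ 1 < p.2 ∧ p.2 < n) → c m p = c₀ p :=
    hbound m le_rfl
  -- the final total coloring
  set col : ℕ → ℕ → Fin 3 := fun x y => (c m (x, y)).getD 0 with hcol
  have hsome : ∀ x y, 1 ≤ x → x ≤ n → 1 ≤ y → y ≤ n → c m (x, y) = some (col x y) := by
    intro x y h1 h2 h3 h4
    obtain ⟨a, ha⟩ := Option.ne_none_iff_exists'.mp (hfull x y h1 h2 h3 h4)
    rw [ha]; simp [hcol, ha]
  by_contra hcon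
  push_neg at hcon
  have hbad : ¬ HasBadSquare n (c m) := hcon m le_rfl
  refine rows_contradiction n hn col ?_ ?_ ?_ ?_ ?_
  · intro y h1 h2
    have := hcm (1, y) (by simp)
    rw [hleft y h1 h2] at this
    simp [hcol, this]
  · intro x h1 h2
    have := hcm (x, 1) (by simp)
    rw [hbottom x h1 h2] at this
    simp [hcol, this]
  · intro y h1 h2
    have := hcm (n, y) (by simp)
    rw [hrest n y (by omega) le_rfl (by omega) h2 (Or.inl rfl) (by omega) (by omega)] at this
    simp [hcol, this]
  · intro x h1 h2
    have := hcm (x, n) (by simp)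
    rw [hrest x n (by omega) h2 (by omega) le_rfl (Or.inr rfl) (by omega) (by omega)] at this
    simp [hcol, this]
  · intro x y h1 h2 h3 h4 hall
    exact hbad ⟨x, y, h1, h2, h3, h4, col x y, col (x+1) y, col x (y+1), col (x+1) (y+1),
      hsome x y h1 (by omega) h3 (by omega),
      hsome (x+1) y (by omega) h2 h3 (by omega),
      hsome x (y+1) h1 (by omega) (by omega) h4,
      hsome (x+1) (y+1) (by omega) h2 (by omega) h4, hall⟩
end
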